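/- Let F/K be a function field of genus g and A a place of degree 1. If two divisors D̃₁ − r₁A and D̃₂ − r₂A are both Hess-reduced degree-zero divisors (D̃ᵢ maximally reduced along A, rᵢ = deg(D̃ᵢ)) and are linearly equivalent, then D̃₁ = D̃₂ and r₁ = r₂. -/
import Mathlib


/-- An axiomatic model of a (geometric) algebraic function field `F` over `K`
with set of places `Place`, place degrees, genus, Riemann-Roch dimension `ell`,
and principal divisor map `pdiv`.  Divisors are finitely supported `ℤ`-valued
functions on places. -/
structure FnFld (K F Place : Type*) [Field K] [Field F] [Algebra K F] where
  /-- degree of a place -/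
  degP : Place → ℕ
  degP_pos : ∀ P, 0 < degP P
  /-- genus -/
  g : ℕ
  /-- dimension of the Riemann-Roch space of a divisor -/
  ell : (Place →₀ ℤ) → ℕ
  /-- principal divisor of a function (junk value at `0`) -/
  pdiv : F → (Place →₀ ℤ)
  pdiv_mul : ∀ a b : F, a ≠ 0 → b ≠ 0 → pdiv (a * b) = pdiv a + pdiv b
  pdiv_inv : ∀ a : F, a ≠ 0 → pdiv a⁻¹ = -(pdiv a)
  degD_pdiv : ∀ a : F, a ≠ 0 → ((pdiv a).sum fun P n => n * (degP P : ℤ)) = 0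
  pdiv_eq_zero_iff : ∀ a : F, a ≠ 0 →
    (pdiv a = 0 ↔ ∃ c : K, a = algebraMap K F c)
  ell_mono : ∀ {D D' : Place →₀ ℤ}, D ≤ D' → ell D ≤ ell D'
  ell_diff_le : ∀ {D D' : Place →₀ ℤ}, D ≤ D' →
    (ell D' : ℤ) - ell D ≤
      (D'.sum fun P n => n * (degP P : ℤ)) - (D.sum fun P n => n * (degP P : ℤ))
  ell_eq_zero_of_neg : ∀ D : Place →₀ ℤ,
    (D.sum fun P n => n * (degP P : ℤ)) < 0 → ell D = 0
  /-- Riemann's inequality `ℓ(D) ≥ deg D + 1 - g` -/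
  riemann : ∀ D : Place →₀ ℤ,
    (D.sum fun P n => n * (degP P : ℤ)) + 1 - g ≤ (ell D : ℤ)
  ell_pos_of_nonneg : ∀ D : Place →₀ ℤ, 0 ≤ D → 0 < ell D
  ell_pos_iff : ∀ D : Place →₀ ℤ, 0 < ell D ↔ ∃ a : F, a ≠ 0 ∧ 0 ≤ D + pdiv a
  ell_add_pdiv : ∀ (D : Place →₀ ℤ) (a : F), a ≠ 0 → ell (D + pdiv a) = ell D
  /-- if `ℓ(E) = 1` then any two nonzero elements of `L(E)` are `K`-proportional -/
  ell_one_dim : ∀ E : Place →₀ ℤ, ell E = 1 → ∀ a b : F, a ≠ 0 → b ≠ 0 →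
    0 ≤ E + pdiv a → 0 ≤ E + pdiv b → ∃ c : K, b = algebraMap K F c * a

namespace FnFld

variable {K F Place : Type*} [Field K] [Field F] [Algebra K F]

/-- degree of a divisor -/
def degD (Φ : FnFld K F Place) (D : Place →₀ ℤ) : ℤ :=
  D.sum fun P n => n * (Φ.degP P : ℤ)

/-- height of a divisor -/
def ht (Φ : FnFld K F Place) (D : Place →₀ ℤ) : ℤ :=
  D.sum fun P n => |n| * (Φ.degP P : ℤ)

/-- the Riemann-Roch space of a divisor, as a set of nonzero functions -/
def L (Φ : FnFld K F Place) (E : Place →₀ ℤ) : Set F :=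
  {a : F | a ≠ 0 ∧ 0 ≤ E + Φ.pdiv a}

/-- linear equivalence of divisors -/
def LinEquiv (Φ : FnFld K F Place) (D D' : Place →₀ ℤ) : Prop :=
  ∃ a : F, a ≠ 0 ∧ D - D' = Φ.pdiv a

/-- `Dt` is maximally reduced along the place `A` -/
def MaxReduced (Φ : FnFld K F Place) (A : Place) (Dt : Place →₀ ℤ) : Prop :=
  0 ≤ Dt ∧ ∀ s : ℤ, 1 ≤ s → Φ.ell (Dt - Finsupp.single A s) = 0

end FnFld

namespace FnFld

variable {K F Place : Type*} [Field K] [Field F] [Algebra K F]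

lemma degD_sub' (Φ : FnFld K F Place) (D D' : Place →₀ ℤ) :
    Φ.degD (D - D') = Φ.degD D - Φ.degD D' := by
  unfold FnFld.degD
  exact Finsupp.sum_sub_index fun a b₁ b₂ => sub_mul _ _ _

lemma degD_single' (Φ : FnFld K F Place) (A : Place) (s : ℤ) :
    Φ.degD (Finsupp.single A s) = s * Φ.degP A :=
  Finsupp.sum_single_index (by simp)

lemma pdiv_one' (Φ : FnFld K F Place) : Φ.pdiv (1 : F) = 0 := by
  have h := Φ.pdiv_mul 1 1 one_ne_zero one_ne_zero
  rw [mul_one] at h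
  exact (left_eq_add.mp h)

lemma ell_eq_one_of_maxReduced (Φ : FnFld K F Place) (A : Place)
    (hA : Φ.degP A = 1) (Dt : Place →₀ ℤ) (h : Φ.MaxReduced A Dt) :
    Φ.ell Dt = 1 := by
  have h0 : Φ.ell (Dt - Finsupp.single A 1) = 0 := h.2 1 le_rfl
  have hle : Dt - Finsupp.single A 1 ≤ Dt :=
    sub_le_self _ (Finsupp.single_nonneg.mpr zero_le_one)
  have hd := Φ.ell_diff_le hle
  have hdeg : Φ.degD Dt - Φ.degD (Dt - Finsupp.single A 1) = 1 := by
    rw [Φ.degD_sub', Φ.degD_single', hA]; ring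
  have hpos := Φ.ell_pos_of_nonneg Dt h.1
  have : (Φ.ell Dt : ℤ) - (Φ.ell (Dt - Finsupp.single A 1) : ℤ) ≤ 1 := by
    have : Φ.degD Dt - Φ.degD (Dt - Finsupp.single A 1) = 1 := hdeg
    calc (Φ.ell Dt : ℤ) - _ ≤ _ := hd
      _ = 1 := hdeg
  rw [h0] at this
  omega

end FnFld

open FnFld in
/-- two linearly equivalent Hess-reduced degree-zero divisors
`D̃₁ - r₁A` and `D̃₂ - r₂A` coincide: `D̃₁ = D̃₂` and `r₁ = r₂`. -/
theorem stmt15 {K F Place : Type*} [Field K] [Field F] [Algebra K F]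
    (Φ : FnFld K F Place) (A : Place) (hA : Φ.degP A = 1)
    (Dt1 Dt2 : Place →₀ ℤ) (r1 r2 : ℤ)
    (h1 : Φ.MaxReduced A Dt1) (h2 : Φ.MaxReduced A Dt2)
    (hr1 : Φ.degD Dt1 = r1) (hr2 : Φ.degD Dt2 = r2)
    (heq : Φ.LinEquiv (Dt1 - Finsupp.single A r1) (Dt2 - Finsupp.single A r2)) :
    Dt1 = Dt2 ∧ r1 = r2 := by
  obtain ⟨a, ha, hpa⟩ := heq
  -- key equation
  have key : Dt1 - Dt2 - Finsupp.single A (r1 - r2) = Φ.pdiv a := by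
    rw [← hpa, Finsupp.single_sub]; abel
  have ha' : a⁻¹ ≠ 0 := inv_ne_zero ha
  have hreq : r1 = r2 := by
    by_contra hne
    rcases lt_or_gt_of_ne hne with hlt | hgt
    · -- r2 - r1 ≥ 1 : Dt2 - single A (r2-r1) = Dt1 + pdiv a⁻¹
      have e : Dt2 - Finsupp.single A (r2 - r1) = Dt1 + Φ.pdiv a⁻¹ := by
        rw [Φ.pdiv_inv a ha, ← key, Finsupp.single_sub, Finsupp.single_sub]; abel
      have h0 := h2.2 (r2 - r1) (by omega)
      rw [e, Φ.ell_add_pdiv Dt1 a⁻¹ ha'] at h0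
      exact absurd h0 (by have := Φ.ell_pos_of_nonneg Dt1 h1.1; omega)
    · have e : Dt1 - Finsupp.single A (r1 - r2) = Dt2 + Φ.pdiv a := by
        rw [← key]; abel
      have h0 := h1.2 (r1 - r2) (by omega)
      rw [e, Φ.ell_add_pdiv Dt2 a ha] at h0
      exact absurd h0 (by have := Φ.ell_pos_of_nonneg Dt2 h2.1; omega)
  subst hreq
  refine ⟨?_, rfl⟩
  have key' : Dt1 - Dt2 = Φ.pdiv a := by
    simpa using key
  have hone := Φ.ell_eq_one_of_maxReduced A hA Dt1 h1
  have hm1 : (0 : Place →₀ ℤ) ≤ Dt1 + Φ.pdiv (1 : F) := by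
    rw [Φ.pdiv_one']; simpa using h1.1
  have hm2 : (0 : Place →₀ ℤ) ≤ Dt1 + Φ.pdiv a⁻¹ := by
    rw [Φ.pdiv_inv a ha, ← key']
    have : Dt1 + -(Dt1 - Dt2) = Dt2 := by abel
    rw [this]; exact h2.1
  obtain ⟨c, hc⟩ := Φ.ell_one_dim Dt1 hone 1 a⁻¹ one_ne_zero ha' hm1 hm2
  rw [mul_one] at hc
  have hz : Φ.pdiv a⁻¹ = 0 := (Φ.pdiv_eq_zero_iff a⁻¹ ha').mpr ⟨c, hc⟩
  rw [Φ.pdiv_inv a ha] at hz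
  have : Φ.pdiv a = 0 := by simpa using (neg_eq_zero.mp hz)
  rw [this] at key'
  exact sub_eq_zero.mp key'
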